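/- arXiv:2602.13461 — 6 statements merged into one kernel-verified Lean document; each statement's English description precedes it below -/
import Mathlib

section
/- If two adjacent haplotypes in a list of strings differ, then in the Positional Burrows–Wheeler Transform of the list, the total number of runs across all columns is at least h'' + 1, where h'' is the number of indices i with S_i ≠ S_{i+1}. -/
/-!
If `S i ≠ S (i + 1)`, let `j` be the first column where they differ. Their prefixes before
column `j` agree, so the stable sort puts them in adjacent rows of column `j`, and there their
symbols differ: a run boundary. Distinct `i` give distinct (column, row) boundaries, and column
`j` has `r_j - 1` boundaries, so `h'' ≤ r̃ - w`, with `w ≥ 1` because two haplotypes differ.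
-/

namespace PBWT

/-- The reversed prefix of length `j` (truncated at `w`) of haplotype `i`:
used to express the co-lexicographic order of prefixes. -/
def revPrefix {h w : ℕ} (S : Fin h → Fin w → ℕ) (j : ℕ) (i : Fin h) : List ℕ :=
  ((List.range j).filterMap (fun t => if ht : t < w then some (S i ⟨t, ht⟩) else none)).reverse

/-- `PA` is the stable sort of the haplotype indices by the co-lexicographic
order of their prefixes of length `j` (ties broken by original index). -/
def IsStableSort {h w : ℕ} (S : Fin h → Fin w → ℕ) (j : ℕ) (PA : Fin h ≃ Fin h) : Prop :=
  ∀ a b : Fin h, a < b →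
    List.Lex (· < ·) (revPrefix S j (PA a)) (revPrefix S j (PA b)) ∨
      (revPrefix S j (PA a) = revPrefix S j (PA b) ∧ (PA a).val < (PA b).val)

/-- Number of maximal runs of equal adjacent values in the sequence `f`. -/
def runCount {α : Type*} [DecidableEq α] {n : ℕ} (f : Fin n → α) : ℕ :=
  ((List.ofFn f).destutter (· ≠ ·)).length

/-- `h''`: the number of indices `i` with `S i ≠ S (i+1)`. -/
noncomputable def adjDiff {h w : ℕ} (S : Fin h → Fin w → ℕ) : ℕ :=
  Nat.card {i : Fin h // ∃ h1 : (i : ℕ) + 1 < h, S i ≠ S ⟨(i : ℕ) + 1, h1⟩}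

open Finset

section Runs

variable {α : Type*} [DecidableEq α]

def runBreaks {n : ℕ} (f : Fin (n + 1) → α) : Finset (Fin n) :=
  {i | f i.castSucc ≠ f i.succ}

lemma card_runBreaks_cons {n : ℕ} (a : α) (f : Fin (n + 1) → α) :
    #(runBreaks (Fin.cons a f : Fin (n + 2) → α)) =
      (if a = f 0 then 0 else 1) + #(runBreaks f) := by
  simp only [runBreaks, card_filter, Fin.sum_univ_succ, Fin.castSucc_zero, Fin.cons_zero,
    Fin.cons_succ]
  split_ifs <;> simp_all

lemma length_destutter'_ofFn (a : α) {n : ℕ} (f : Fin n → α) :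
    ((List.ofFn f).destutter' (· ≠ ·) a).length =
      #(runBreaks (Fin.cons a f : Fin (n + 1) → α)) + 1 := by
  induction n generalizing a with
  | zero => simp [runBreaks]
  | succ n ih =>
    have hf : (Fin.cons (f 0) fun i => f i.succ : Fin (n + 1) → α) = f := Fin.cons_self_tail f
    rw [List.ofFn_succ, List.destutter'_cons, card_runBreaks_cons]
    by_cases h : a = f 0
    · subst h; simp [ih, hf]
    · simp [h, ih, hf, add_comm]

lemma runCount_eq_card_runBreaks_add_one {n : ℕ} (f : Fin (n + 1) → α) :
    runCount f = #(runBreaks f) + 1 := by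
  rw [runCount, List.ofFn_succ, List.destutter_cons', length_destutter'_ofFn]
  exact congrArg (fun g => #(runBreaks g) + 1) (Fin.cons_self_tail f)

end Runs

lemma adjDiff_eq_card_runBreaks {m w : ℕ} (S : Fin (m + 1) → Fin w → ℕ) :
    adjDiff S = #(runBreaks S) := by
  rw [adjDiff, ← Nat.card_eq_finsetCard]
  exact Nat.card_congr
    { toFun := fun i => ⟨⟨i, by obtain ⟨h1, -⟩ := i.2; omega⟩,
        by obtain ⟨-, hne⟩ := i.2; exact mem_filter.2 ⟨mem_univ _, hne⟩⟩
      invFun := fun i => ⟨i.1.castSucc, by simp, (mem_filter.1 i.2).2⟩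
      left_inv := fun _ => rfl
      right_inv := fun _ => rfl }

lemma exists_forall_lt_eq_of_ne {ι β : Type*} [LinearOrder ι] [WellFoundedLT ι]
    {f g : ι → β} (hfg : f ≠ g) : ∃ j, f j ≠ g j ∧ ∀ t < j, f t = g t := by
  obtain ⟨j, hj, hmin⟩ := wellFounded_lt.has_min {t | f t ≠ g t} (Function.ne_iff.1 hfg)
  exact ⟨j, hj, fun t ht => not_not.1 fun hne => hmin t hne ht⟩

lemma Fin.exists_castSucc_eq_succ_eq_of_covBy {m : ℕ} {a b : Fin (m + 1)} (hab : a ⋖ b) :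
    ∃ p : Fin m, p.castSucc = a ∧ p.succ = b := by
  have hb : (a : ℕ) + 1 = b := Nat.covBy_iff_add_one_eq.1 (Fin.covBy_iff.1 hab)
  exact ⟨⟨a, by omega⟩, rfl, Fin.ext hb⟩

section StableSort

variable {h w : ℕ} {S : Fin h → Fin w → ℕ}

lemma revPrefix_eq_of_forall_lt {j : ℕ} {a b : Fin h}
    (hab : ∀ t : Fin w, (t : ℕ) < j → S a t = S b t) :
    revPrefix S j a = revPrefix S j b := by
  unfold revPrefix
  congr 1
  refine List.filterMap_congr fun t ht => ?_
  split_ifs with htw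
  · rw [hab ⟨t, htw⟩ (List.mem_range.1 ht)]
  · rfl

variable {j : ℕ} {PA : Fin h ≃ Fin h}

lemma IsStableSort.strictMono (hPA : IsStableSort S j PA) :
    StrictMono fun p => toLex (revPrefix S j (PA p), (PA p : ℕ)) :=
  fun p q hpq => Prod.Lex.toLex_lt_toLex.2 (hPA p q hpq)

lemma IsStableSort.symm_covBy_symm (hPA : IsStableSort S j PA) {a b : Fin h}
    (hkey : revPrefix S j a = revPrefix S j b) (hab : (a : ℕ) + 1 = b) :
    PA.symm a ⋖ PA.symm b := by
  refine CovBy.of_image (OrderEmbedding.ofStrictMono _ hPA.strictMono) ?_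
  simp [Prod.Lex.toLex_covBy_toLex_iff, hkey, hab]

end StableSort

lemma card_runBreaks_le_sum_card_runBreaks {m w : ℕ} {S : Fin (m + 1) → Fin w → ℕ}
    {PA : Fin w → Fin (m + 1) ≃ Fin (m + 1)} (hPA : ∀ j : Fin w, IsStableSort S j (PA j)) :
    #(runBreaks S) ≤ ∑ j, #(runBreaks fun p => S (PA j p) j) := by
  have hsub : (runBreaks S).map Fin.castSuccEmb ⊆
      (univ.sigma fun j => runBreaks fun p => S (PA j p) j).image
        fun x : Σ _ : Fin w, Fin m => PA x.1 x.2.castSucc := by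
    intro i' hi'
    obtain ⟨i, hi, rfl⟩ := mem_map.1 hi'
    obtain ⟨j, hne, hprefix⟩ := exists_forall_lt_eq_of_ne (mem_filter.1 hi).2
    obtain ⟨p, hp, hp'⟩ := Fin.exists_castSucc_eq_succ_eq_of_covBy <|
      (hPA j).symm_covBy_symm (revPrefix_eq_of_forall_lt hprefix) (by simp)
    refine mem_image.2 ⟨⟨j, p⟩, mem_sigma.2 ⟨mem_univ _, ?_⟩, by simp [hp]⟩
    simpa [runBreaks, hp, hp'] using hne
  calc #(runBreaks S) = #((runBreaks S).map Fin.castSuccEmb) := (card_map _).symm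
    _ ≤ #((univ.sigma _).image _) := card_le_card hsub
    _ ≤ #(univ.sigma _) := card_image_le
    _ = _ := card_sigma _ _

theorem stmt0 (h w : ℕ) (S : Fin h → Fin w → ℕ) (PA : Fin w → Fin h ≃ Fin h)
    (hPA : ∀ j : Fin w, IsStableSort S (j : ℕ) (PA j))
    (hdiff : ∃ i : Fin h, ∃ h1 : (i : ℕ) + 1 < h, S i ≠ S ⟨(i : ℕ) + 1, h1⟩) :
    adjDiff S + 1 ≤ ∑ j : Fin w, runCount (fun i : Fin h => S (PA j i) j) := by
  obtain ⟨i, hi, hne⟩ := hdiff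
  have hw : 0 < w := Nat.pos_of_ne_zero fun hw => hne (funext fun t => (hw ▸ t).elim0)
  obtain ⟨m, rfl⟩ : ∃ m, h = m + 1 := ⟨h - 1, by omega⟩
  simp only [runCount_eq_card_runBreaks_add_one, sum_add_distrib, adjDiff_eq_card_runBreaks]
  have hbreaks := card_runBreaks_le_sum_card_runBreaks hPA
  simp only [sum_const, card_univ, Fintype.card_fin, smul_eq_mul, mul_one]
  omega

end PBWT
end

section
/- The total number of runs r̃ in the PBWT of a list of h haplotypes of length w is at least the number of distinct strings among S_1,…,S_h. -/
/-!
Let `D j` be the number of distinct length-`j` prefixes, so `D 0 = 1` and `D w` is the number of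
distinct haplotypes. In column `j` the prefixes are sorted, so they form exactly `D j` runs, and the
distinct length-`(j+1)` prefixes are at most the runs of the column of pairs
`(S i j, prefix of i)`. Every run boundary of the pairs is a boundary of one of the two components,
so `D (j+1) ≤ r j + D j - 1`. Summing over the `w ≥ 1` columns gives `D w + w ≤ 1 + r̃`.
-/

namespace PBWT

section Runs

variable {α β : Type*} [DecidableEq α] [DecidableEq β]

theorem _root_.List.length_dedup_le_length_destutter_ne (l : List α) :
    l.dedup.length ≤ (l.destutter (· ≠ ·)).length :=
  (List.nodup_dedup l).isChain.length_le_length_destutter_ne (List.dedup_sublist l)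

theorem _root_.List.length_destutter'_prod_add_one_le (l : List (α × β)) (a : α × β) :
    (l.destutter' (· ≠ ·) a).length + 1 ≤
      ((l.map Prod.fst).destutter' (· ≠ ·) a.1).length +
        ((l.map Prod.snd).destutter' (· ≠ ·) a.2).length := by
  induction l generalizing a with
  | nil => simp
  | cons b l ih =>
    rcases eq_or_ne a b with rfl | hab
    · simpa [List.destutter'_cons] using ih a
    · obtain ⟨a₁, a₂⟩ := a
      obtain ⟨b₁, b₂⟩ := b
      have := ih (b₁, b₂)
      dsimp only at this
      rw [List.destutter'_cons_pos (R := (· ≠ ·)) _ hab]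
      simp only [List.map_cons, List.destutter'_cons]
      split_ifs with h₁ h₂ h₂
      · simp only [List.length_cons]
        omega
      · obtain rfl := not_ne_iff.1 h₂
        simp only [List.length_cons]
        omega
      · obtain rfl := not_ne_iff.1 h₁
        simp only [List.length_cons]
        omega
      · exact absurd (Prod.ext (not_ne_iff.1 h₁) (not_ne_iff.1 h₂)) hab

theorem _root_.List.length_destutter_prod_add_one_le {l : List (α × β)} (hl : l ≠ []) :
    (l.destutter (· ≠ ·)).length + 1 ≤
      ((l.map Prod.fst).destutter (· ≠ ·)).length +
        ((l.map Prod.snd).destutter (· ≠ ·)).length := by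
  obtain ⟨a, l, rfl⟩ := List.exists_cons_of_ne_nil hl
  simpa only [List.map_cons, List.destutter_cons'] using l.length_destutter'_prod_add_one_le a

variable {n : ℕ}

theorem ncard_range_eq_length_dedup (f : Fin n → α) :
    (Set.range f).ncard = (List.ofFn f).dedup.length := by
  rw [← List.card_toFinset, ← Set.ncard_coe_finset, List.coe_toFinset]
  exact congrArg Set.ncard (Set.ext fun _ => List.mem_ofFn.symm)

theorem ncard_range_le_runCount (f : Fin n → α) : (Set.range f).ncard ≤ runCount f :=
  (ncard_range_eq_length_dedup f).trans_le (List.length_dedup_le_length_destutter_ne _)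

theorem runCount_eq_ncard_range_of_monotone [PartialOrder α] {f : Fin n → α} (hf : Monotone f) :
    runCount f = (Set.range f).ncard := by
  rw [ncard_range_eq_length_dedup, runCount, List.Pairwise.destutter_eq_dedup (r := (· ≤ ·))]
  exact List.pairwise_ofFn.2 fun _ _ hij => hf hij.le

theorem runCount_prod_add_one_le (hn : 0 < n) (f : Fin n → α) (g : Fin n → β) :
    runCount (fun i => (f i, g i)) + 1 ≤ runCount f + runCount g := by
  simpa [runCount, List.map_ofFn, Function.comp_def] using
    List.length_destutter_prod_add_one_le (l := List.ofFn fun i => (f i, g i))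
      (by simpa using hn.ne')

end Runs

theorem add_le_add_sum_of_forall_succ_add_one_le {D : ℕ → ℕ} :
    ∀ {w : ℕ} {r : Fin w → ℕ}, (∀ j : Fin w, D (j + 1) + 1 ≤ D j + r j) →
      D w + w ≤ D 0 + ∑ j, r j
  | 0, _, _ => by simp
  | w + 1, r, hr => by
    have hw := add_le_add_sum_of_forall_succ_add_one_le (r := r ∘ Fin.castSucc)
      fun j => hr j.castSucc
    have hlast := hr (Fin.last w)
    simp only [Function.comp_apply, Fin.val_last] at hw hlast
    rw [Fin.sum_univ_castSucc]
    omega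

section Prefixes

variable {h w : ℕ} (S : Fin h → Fin w → ℕ)

theorem revPrefix_zero (i : Fin h) : revPrefix S 0 i = [] := by
  simp [revPrefix]

theorem revPrefix_succ (j : Fin w) (i : Fin h) :
    revPrefix S (j + 1) i = S i j :: revPrefix S j i := by
  simp [revPrefix, List.range_succ, List.filterMap_append, j.2]

theorem revPrefix_eq_reverse_ofFn {j : ℕ} (hj : j ≤ w) (i : Fin h) :
    revPrefix S j i = (List.ofFn fun k : Fin j => S i (Fin.castLE hj k)).reverse := by
  induction j with
  | zero => simp [revPrefix_zero]
  | succ j ih =>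
    rw [revPrefix_succ S ⟨j, hj⟩, ih (by omega), List.ofFn_succ', List.concat_eq_append,
      List.reverse_append]
    rfl

theorem ncard_range_revPrefix_zero (hh : 0 < h) : (Set.range (revPrefix S 0)).ncard = 1 := by
  have := Fin.pos_iff_nonempty.1 hh
  simp [revPrefix_zero]

theorem ncard_range_revPrefix_self : (Set.range (revPrefix S w)).ncard = (Set.range S).ncard := by
  have : revPrefix S w = (fun v : Fin w → ℕ => (List.ofFn v).reverse) ∘ S :=
    funext fun i => by simp [revPrefix_eq_reverse_ofFn S le_rfl]
  rw [this, Set.range_comp, Set.ncard_image_of_injective _ fun v v' hvv' => by simpa using hvv']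

theorem IsStableSort.monotone {j : ℕ} {PA : Fin h ≃ Fin h} (hPA : IsStableSort S j PA) :
    Monotone fun i => revPrefix S j (PA i) := by
  refine monotone_iff_forall_lt.2 fun a b hab => ?_
  rcases hPA a b hab with hlt | ⟨heq, -⟩
  exacts [le_of_lt hlt, heq.le]

theorem ncard_range_revPrefix_succ_add_one_le (hh : 0 < h) (j : Fin w) {PA : Fin h ≃ Fin h}
    (hPA : IsStableSort S j PA) :
    (Set.range (revPrefix S (j + 1))).ncard + 1 ≤
      (Set.range (revPrefix S j)).ncard + runCount (fun i => S (PA i) j) := by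
  set p := fun i => revPrefix S j (PA i)
  set s := fun i => S (PA i) j
  have hsucc : Set.range (revPrefix S (j + 1)) =
      (fun x : ℕ × List ℕ => x.1 :: x.2) '' Set.range (fun i => (s i, p i)) := by
    rw [← Set.range_comp, ← EquivLike.range_comp _ PA]
    congr 1
    funext i
    exact revPrefix_succ S j (PA i)
  have hcur : (Set.range (revPrefix S j)).ncard = runCount p := by
    rw [runCount_eq_ncard_range_of_monotone hPA.monotone, ← EquivLike.range_comp _ PA]
    rfl
  calc (Set.range (revPrefix S (j + 1))).ncard + 1
      = (Set.range fun i => (s i, p i)).ncard + 1 := by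
        rw [hsucc, Set.ncard_image_of_injective _ fun x y hxy => by simpa [Prod.ext_iff] using hxy]
    _ ≤ runCount (fun i => (s i, p i)) + 1 := by grw [ncard_range_le_runCount]
    _ ≤ runCount s + runCount p := runCount_prod_add_one_le hh s p
    _ = (Set.range (revPrefix S j)).ncard + runCount s := by rw [hcur, add_comm]

end Prefixes

theorem stmt1 (h w : ℕ) (hw : 0 < w) (S : Fin h → Fin w → ℕ) (PA : Fin w → Fin h ≃ Fin h)
    (hPA : ∀ j : Fin w, IsStableSort S (j : ℕ) (PA j)) :
    (Set.range S).ncard ≤ ∑ j : Fin w, runCount (fun i : Fin h => S (PA j i) j) := by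
  rcases Nat.eq_zero_or_pos h with rfl | hh
  · simp [Set.range_eq_empty]
  have htelescope := add_le_add_sum_of_forall_succ_add_one_le
    (D := fun j => (Set.range (revPrefix S j)).ncard)
    fun j => ncard_range_revPrefix_succ_add_one_le S hh j (hPA j)
  rw [ncard_range_revPrefix_self, ncard_range_revPrefix_zero S hh] at htelescope
  omega

end PBWT
end

section
/- For every column j, the number ℓ_j of canonical intervals with respect to column j satisfies ℓ_j ≤ h'' + 1, where h'' is the number of adjacent pairs of distinct haplotypes in the input list. -/
namespace PBWT

-- auxiliary lemmas

lemma destutter'_length {α : Type*} [DecidableEq α] (l : List α) : ∀ a : α,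
    (List.destutter' (· ≠ ·) a l).length
      = 1 + (((a :: l).zip l).countP (fun p => p.1 ≠ p.2)) := by
  induction l with
  | nil => intro a; simp [List.destutter']
  | cons b l ih =>
    intro a
    rw [List.destutter'_cons, List.zip_cons_cons, List.countP_cons]
    by_cases hab : a = b
    · subst hab
      simp only [ne_eq, not_true_eq_false, if_false, decide_not, ih a]
      simp
    · simp only [ne_eq, hab, not_false_eq_true, if_true, List.length_cons, ih b]
      simp [hab]
      omega

lemma zip_ofFn {α β : Type*} {n : ℕ} (f : Fin (n+1) → α) (g : Fin n → β) :
    (List.ofFn f).zip (List.ofFn g) = List.ofFn (fun i : Fin n => (f i.castSucc, g i)) := by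
  apply List.ext_getElem
  · simp
  · intro i h1 h2
    simp only [List.getElem_zip, List.getElem_ofFn]
    congr 1

lemma countP_ofFn {α : Type*} {n : ℕ} (f : Fin n → α) (p : α → Bool) :
    (List.ofFn f).countP p = (Finset.univ.filter (fun i => p (f i) = true)).card := by
  induction n with
  | zero => simp
  | succ n ih =>
    rw [List.ofFn_succ, List.countP_cons, ih]
    rw [Finset.card_filter, Finset.card_filter, Fin.sum_univ_succ]
    simp [add_comm]

section runStart

variable {h w : ℕ} (S : Fin h → Fin w → ℕ)

def runStartP (i : Fin h) (l : ℕ) : Prop :=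
  ∀ x : Fin h, l ≤ x.val → x ≤ i → S x = S i

instance (i : Fin h) : DecidablePred (runStartP S i) := fun _ => by
  unfold runStartP; infer_instance

lemma runStartP_self (i : Fin h) : runStartP S i i.val := by
  intro x hx1 hx2
  have : x = i := Fin.ext (le_antisymm hx2 hx1)
  rw [this]

def runStart (i : Fin h) : ℕ := Nat.find ⟨i.val, runStartP_self S i⟩

lemma runStart_le (i : Fin h) : runStart S i ≤ i.val :=
  Nat.find_le (runStartP_self S i)

lemma runStart_spec (i : Fin h) : runStartP S i (runStart S i) :=
  Nat.find_spec _

lemma runStart_min {i : Fin h} {l : ℕ} (hl : l < runStart S i) : ¬ runStartP S i l :=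
  Nat.find_min _ hl

lemma revPrefix_congr {j : ℕ} {i i' : Fin h} (hS : S i = S i') :
    revPrefix S j i = revPrefix S j i' := by
  unfold revPrefix
  rw [hS]

/-- Sorted betweenness: if sorted positions `b1 ≤ b2 ≤ b3` and the haplotypes at
positions `b1` and `b3` are in the same original run, then position `b2` carries
the same row as position `b3`. -/
lemma sorted_between {j : ℕ} {PA : Fin h ≃ Fin h} (hPA : IsStableSort S j PA)
    {b1 b2 b3 : Fin h} (h12 : b1 ≤ b2) (h23 : b2 ≤ b3)
    (hr : runStart S (PA b1) = runStart S (PA b3)) :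
    S (PA b2) = S (PA b3) := by
  have hS13 : S (PA b1) = S (PA b3) := by
    rcases le_total ((PA b1 : Fin h) : ℕ) ((PA b3 : Fin h) : ℕ) with hle | hle
    · exact runStart_spec S (PA b3) (PA b1) (by rw [← hr]; exact runStart_le S (PA b1))
        (Fin.le_def.mpr hle)
    · exact (runStart_spec S (PA b1) (PA b3) (by rw [hr]; exact runStart_le S (PA b3))
        (Fin.le_def.mpr hle)).symm
  rcases eq_or_lt_of_le h23 with h23' | h23'
  · rw [h23']
  rcases eq_or_lt_of_le h12 with h12' | h12'
  · rw [← h12']; exact hS13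
  have hP13 : revPrefix S j (PA b1) = revPrefix S j (PA b3) := revPrefix_congr S hS13
  rcases hPA b1 b2 h12' with hL12 | ⟨hE12, hi12⟩
  · rcases hPA b2 b3 h23' with hL23 | ⟨hE23, _⟩
    · rw [← hP13] at hL23
      exact absurd hL12 (asymm hL23)
    · rw [hP13] at hL12
      rw [hE23] at hL12
      exact absurd hL12 (asymm hL12)
  · rcases hPA b2 b3 h23' with hL23 | ⟨_, hi23⟩
    · rw [← hP13, ← hE12] at hL23
      exact absurd hL23 (asymm hL23)
    · -- indices: PA b1 < PA b2 < PA b3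
      refine runStart_spec S (PA b3) (PA b2) ?_ (Fin.le_def.mpr (le_of_lt hi23))
      calc runStart S (PA b3) = runStart S (PA b1) := hr.symm
        _ ≤ ((PA b1 : Fin h) : ℕ) := runStart_le S (PA b1)
        _ ≤ ((PA b2 : Fin h) : ℕ) := le_of_lt hi12

/-- Every run start is `0` or sits just after an adjacent difference. -/
lemma runStart_cases (i : Fin h) (hne : runStart S i ≠ 0) :
    ∃ h1 : (runStart S i - 1) + 1 < h,
      S ⟨runStart S i - 1, by omega⟩ ≠ S ⟨(runStart S i - 1) + 1, h1⟩ := by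
  set l := runStart S i with hl
  have hli : l ≤ i.val := runStart_le S i
  have hlt : l - 1 + 1 < h := by have := i.isLt; omega
  refine ⟨hlt, ?_⟩
  have hmin : ¬ runStartP S i (l - 1) := runStart_min S (by omega)
  unfold runStartP at hmin
  push_neg at hmin
  obtain ⟨x, hx1, hx2, hx3⟩ := hmin
  have hxl : x.val < l := by
    by_contra hc
    exact hx3 (runStart_spec S i x (by omega) hx2)
  have hxv : x.val = l - 1 := by omega
  have hSl : S ⟨l - 1 + 1, hlt⟩ = S i := by
    refine runStart_spec S i _ (by simp; omega) (Fin.le_def.mpr ?_)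
    simp; omega
  have hx : x = ⟨l - 1, by omega⟩ := Fin.ext hxv
  rw [← hx, hSl]
  exact hx3

end runStart

theorem stmt3 (h w : ℕ) (S : Fin h → Fin w → ℕ) (j : Fin w) (PA : Fin h ≃ Fin h)
    (hPA : IsStableSort S (j : ℕ) PA) :
    runCount (fun i : Fin h => S (PA i)) ≤ adjDiff S + 1 := by
  classical
  obtain _ | m := h
  · simp [runCount]
  set g : Fin (m+1) → (Fin w → ℕ) := fun b => S (PA b) with hg
  -- compute runCount as 1 + number of sorted boundaries
  set Bs : Finset (Fin m) :=
    Finset.univ.filter (fun i : Fin m => g i.castSucc ≠ g i.succ) with hBs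
  have hrc : runCount g = 1 + Bs.card := by
    rw [runCount, List.ofFn_succ, List.destutter_cons', destutter'_length,
      ← List.ofFn_succ]
    rw [zip_ofFn g (fun i : Fin m => g i.succ), countP_ofFn]
    have : runStart S (PA (0:Fin (m+1))) = runStart S (PA 0) := rfl
    exact congrArg (fun n => 1 + n)
      (congrArg Finset.card (Finset.filter_congr (fun i _ => by simp [hBs])))
  -- adjDiff as a Finset card
  set D : Finset (Fin (m+1)) :=
    Finset.univ.filter
      (fun i : Fin (m+1) => ∃ h1 : (i : ℕ) + 1 < m + 1, S i ≠ S ⟨(i : ℕ) + 1, h1⟩) with hD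
  have hDcard : adjDiff S = D.card := by
    rw [adjDiff, Nat.card_eq_fintype_card, Fintype.card_subtype]
  -- the injection
  set RS : Finset ℕ := Finset.univ.image (fun i : Fin (m+1) => runStart S i) with hRS
  have key : ∀ b1 b2 b3 : Fin (m+1), b1 ≤ b2 → b2 ≤ b3 →
      runStart S (PA b1) = runStart S (PA b3) → S (PA b2) = S (PA b3) :=
    fun b1 b2 b3 h12 h23 hr => sorted_between S hPA h12 h23 hr
  set r0 : ℕ := runStart S (PA 0) with hr0
  have hmap : ∀ b ∈ Bs, runStart S (PA b.succ) ∈ RS.erase r0 := by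
    intro b hb
    rw [Finset.mem_erase]
    constructor
    · intro hc
      have := key 0 b.castSucc b.succ (Fin.zero_le _)
        (Fin.le_def.mpr (by simp [Fin.le_def])) hc.symm
      simp only [hBs, Finset.mem_filter] at hb
      exact hb.2 this
    · exact Finset.mem_image_of_mem _ (Finset.mem_univ _)
  have hinj : ∀ b1 ∈ Bs, ∀ b2 ∈ Bs,
      runStart S (PA b1.succ) = runStart S (PA b2.succ) → b1 = b2 := by
    intro b1 hb1 b2 hb2 heq
    by_contra hne
    rcases lt_or_gt_of_ne hne with hlt | hlt
    · have h1 : b1.succ ≤ b2.castSucc := by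
        rw [Fin.le_def]; simp; exact hlt
      have := key b1.succ b2.castSucc b2.succ h1
        (Fin.le_def.mpr (by simp [Fin.le_def])) heq
      simp only [hBs, Finset.mem_filter] at hb2
      exact hb2.2 this
    · have h1 : b2.succ ≤ b1.castSucc := by
        rw [Fin.le_def]; simp; exact hlt
      have := key b2.succ b1.castSucc b1.succ h1
        (Fin.le_def.mpr (by simp [Fin.le_def])) heq.symm
      simp only [hBs, Finset.mem_filter] at hb1
      exact hb1.2 this
  have hBsle : Bs.card ≤ (RS.erase r0).card :=
    Finset.card_le_card_of_injOn _ hmap (fun b1 hb1 b2 hb2 => hinj b1 hb1 b2 hb2)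
  have hr0RS : r0 ∈ RS := Finset.mem_image_of_mem _ (Finset.mem_univ _)
  have herase : (RS.erase r0).card = RS.card - 1 := Finset.card_erase_of_mem hr0RS
  -- RS ⊆ insert 0 (image of D)
  have hRSsub : RS ⊆ insert 0 (D.image (fun i : Fin (m+1) => (i : ℕ) + 1)) := by
    intro l hl
    rw [hRS, Finset.mem_image] at hl
    obtain ⟨i, -, hi⟩ := hl
    rcases eq_or_ne l 0 with h0 | h0
    · rw [h0]; exact Finset.mem_insert_self _ _
    · refine Finset.mem_insert_of_mem ?_
      rw [Finset.mem_image]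
      have hcase := runStart_cases S i (by rw [hi]; exact h0)
      obtain ⟨h1, hne⟩ := hcase
      refine ⟨⟨runStart S i - 1, by omega⟩, ?_, ?_⟩
      · rw [hD, Finset.mem_filter]
        exact ⟨Finset.mem_univ _, ⟨h1, hne⟩⟩
      · simp only
        have : runStart S i ≠ 0 := by rw [hi]; exact h0
        omega
  have hRScard : RS.card ≤ D.card + 1 := by
    calc RS.card ≤ (insert 0 (D.image (fun i : Fin (m+1) => (i : ℕ) + 1))).card :=
          Finset.card_le_card hRSsub
      _ ≤ (D.image (fun i : Fin (m+1) => (i : ℕ) + 1)).card + 1 :=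
          Finset.card_insert_le _ _
      _ ≤ D.card + 1 := by gcongr; exact Finset.card_image_le
  have hRSpos : 1 ≤ RS.card := Finset.card_pos.mpr ⟨r0, hr0RS⟩
  rw [hg] at hrc ⊢
  rw [hrc, hDcard]
  omega

end PBWT
end

section
/- The total number of runs in the PBWT satisfies r̃ ≤ w·(h'' + 1), where w is the haplotype length and h'' the number of adjacent distinct-haplotype pairs. -/
namespace PBWT

/-!
Cut the haplotypes, taken in input order, into maximal blocks of consecutive equal strings;
there are at most `h'' + 1` blocks, and `blockIndex` numbers them. Equal strings have equal
prefixes, and the stable sort keeps strings with equal prefixes in input order, so every block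
stays contiguous in every PBWT column. A column is constant on each block, so it has at most
as many runs as there are blocks.
-/

open Finset

section

variable {α β : Type*} [DecidableEq α] {n : ℕ}

def changes (s : Fin n → α) : Finset (Fin n) :=
  univ.filter fun i => ∃ h1 : (i : ℕ) + 1 < n, s i ≠ s ⟨(i : ℕ) + 1, h1⟩

theorem adjDiff_eq_card_changes {h w : ℕ} (S : Fin h → Fin w → ℕ) :
    adjDiff S = #(changes S) := by
  rw [adjDiff, Nat.card_eq_fintype_card, Fintype.card_subtype, changes]

theorem runCount_eq_runCount_tail_add (f : Fin (n + 2) → α) :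
    runCount f = runCount (Fin.tail f) + if f 0 = f 1 then 0 else 1 := by
  rw [runCount, runCount, List.ofFn_succ, List.ofFn_succ, List.destutter_cons_cons,
    List.ofFn_succ (f := Fin.tail f), List.destutter_cons']
  simp only [Fin.succ_zero_eq_one', ne_eq, ite_not]
  split_ifs with h01
  · rw [h01]; rfl
  · rfl

theorem card_changes_tail_add_le (f : Fin (n + 2) → α) :
    #(changes (Fin.tail f)) + (if f 0 = f 1 then 0 else 1) ≤ #(changes f) := by
  have hsucc : (changes (Fin.tail f)).map (Fin.succEmb _) ⊆ changes f := by
    intro i hi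
    obtain ⟨i, hi', rfl⟩ := mem_map.mp hi
    obtain ⟨h1, hne⟩ := (mem_filter.mp hi').2
    exact mem_filter.mpr ⟨mem_univ _, by simp only [Fin.coe_succEmb, Fin.val_succ]; omega, hne⟩
  split_ifs with h01
  · simpa using card_le_card hsucc
  · have h0 : (0 : Fin (n + 2)) ∈ changes f := mem_filter.mpr ⟨mem_univ _, by simp, h01⟩
    have h0' : (0 : Fin (n + 2)) ∉ (changes (Fin.tail f)).map (Fin.succEmb _) := by
      simp [Fin.succ_ne_zero]
    simpa [card_cons] using card_le_card (cons_subset.mpr ⟨h0, hsucc⟩ : cons 0 _ h0' ⊆ _)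

theorem runCount_le_card_changes_add_one (f : Fin n → α) : runCount f ≤ #(changes f) + 1 := by
  induction n with
  | zero => simp [runCount]
  | succ n ih =>
    cases n with
    | zero => simp [runCount]
    | succ n =>
      have := card_changes_tail_add_le f
      have := ih (Fin.tail f)
      rw [runCount_eq_runCount_tail_add]
      omega

theorem changes_subset_changes {f : Fin n → α} {g : Fin n → β} [DecidableEq β]
    (hfg : ∀ a b, g a = g b → f a = f b) : changes f ⊆ changes g := by
  intro i hi
  obtain ⟨h1, hne⟩ := (mem_filter.mp hi).2
  exact mem_filter.mpr ⟨mem_univ _, h1, mt (hfg _ _) hne⟩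

-- A change `i` is sent to the value `c (i + 1)`: convexity of the fibers makes these values
-- pairwise distinct and different from `c 0`.
theorem card_changes_add_one_le_card_image [DecidableEq β] (c : Fin (n + 1) → β)
    (hc : ∀ v, (c ⁻¹' {v}).OrdConnected) : #(changes c) + 1 ≤ #(univ.image c) := by
  have next_eq {i : Fin (n + 1)} (h1 : (i : ℕ) + 1 < n + 1) :
      (⟨(i : ℕ) + 1, h1⟩ : Fin (n + 1)) = i + 1 :=
    Fin.ext (Fin.val_add_one_of_lt' h1).symm
  have no_return {i k : Fin (n + 1)} (hik : i ≤ k) (hk : k ∈ changes c)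
      (hck : c i = c (k + 1)) : False := by
    obtain ⟨h1, hne⟩ := (mem_filter.mp hk).2
    rw [next_eq h1] at hne
    have hk1 : k ≤ k + 1 := by rw [Fin.le_def, ← next_eq h1]; exact Nat.le_succ _
    exact hne (((hc (c i)).out rfl hck.symm ⟨hik, hk1⟩).trans hck)
  have hmaps : Set.MapsTo (fun i => c (i + 1)) (changes c) ((univ.image c).erase (c 0)) :=
    fun i hi => mem_erase.mpr ⟨fun h => no_return (Fin.zero_le i) hi h.symm,
      mem_image_of_mem c (mem_univ _)⟩
  have hinj : Set.InjOn (fun i => c (i + 1)) (changes c) := by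
    intro i hi k hk hik
    by_contra hne
    rcases lt_or_gt_of_ne hne with hlt | hlt
    · exact no_return (Fin.add_one_le_of_lt hlt) hk hik
    · exact no_return (Fin.add_one_le_of_lt hlt) hi hik.symm
  calc #(changes c) + 1 ≤ #((univ.image c).erase (c 0)) + 1 := by
        gcongr; exact card_le_card_of_injOn _ hmaps hinj
    _ = #(univ.image c) := card_erase_add_one (mem_image_of_mem c (mem_univ 0))

theorem exists_mem_changes_of_ne (s : Fin n → α) {x z : Fin n} (hxz : x ≤ z)
    (hne : s x ≠ s z) : ∃ t ∈ changes s, x ≤ t ∧ t < z := by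
  obtain ⟨x, hx⟩ := x
  obtain ⟨z, hz⟩ := z
  simp only [Fin.mk_le_mk] at hxz
  induction z, hxz using Nat.le_induction with
  | base => exact absurd rfl hne
  | succ z hxz ih =>
    by_cases hstep : s ⟨z, by omega⟩ = s ⟨z + 1, hz⟩
    · obtain ⟨t, ht, hxt, htz⟩ := ih (by omega) (hstep ▸ hne)
      exact ⟨t, ht, hxt, htz.trans (Fin.mk_lt_mk.mpr (Nat.lt_succ_self z))⟩
    · exact ⟨⟨z, by omega⟩, mem_filter.mpr ⟨mem_univ _, hz, hstep⟩, Fin.mk_le_mk.mpr hxz,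
        Fin.mk_lt_mk.mpr (Nat.lt_succ_self z)⟩

def blockIndex (s : Fin n → α) (i : Fin n) : ℕ := #((changes s).filter (· < i))

theorem blockIndex_mono (s : Fin n → α) : Monotone (blockIndex s) :=
  fun _ _ hxy => card_le_card (monotone_filter_right _ fun _ _ ht => ht.trans_le hxy)

theorem eq_of_blockIndex_eq (s : Fin n → α) {x z : Fin n}
    (hxz : blockIndex s x = blockIndex s z) : s x = s z := by
  wlog hle : x ≤ z generalizing x z
  · exact (this hxz.symm (le_of_not_ge hle)).symm
  by_contra hne
  obtain ⟨t, ht, hxt, htz⟩ := exists_mem_changes_of_ne s hle hne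
  have hsub : (changes s).filter (· < x) ⊂ (changes s).filter (· < z) :=
    (ssubset_iff_of_subset (monotone_filter_right _ fun _ _ h => h.trans_le hle)).mpr
      ⟨t, mem_filter.mpr ⟨ht, htz⟩, fun h => not_lt_of_ge hxt (mem_filter.mp h).2⟩
  exact (card_lt_card hsub).ne hxz

theorem card_image_blockIndex_le (s : Fin n → α) :
    #(univ.image (blockIndex s)) ≤ #(changes s) + 1 := by
  have : univ.image (blockIndex s) ⊆ range (#(changes s) + 1) := image_subset_iff.mpr fun i _ =>
    mem_range.mpr (Nat.lt_succ_of_le (card_filter_le _ _))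
  simpa using card_le_card this

end

section

variable {h w : ℕ} {S : Fin h → Fin w → ℕ} {PA : Fin h ≃ Fin h}

theorem IsStableSort.mem_Ioo_of_revPrefix_eq {j : ℕ} (hPA : IsStableSort S j PA) {i m k : Fin h}
    (him : i < m) (hmk : m < k) (hik : revPrefix S j (PA i) = revPrefix S j (PA k)) :
    PA m ∈ Set.Ioo (PA i) (PA k) := by
  rcases hPA i m him with hlt | ⟨heq, hidx⟩ <;> rcases hPA m k hmk with hlt' | ⟨heq', hidx'⟩
  · rw [← hik] at hlt'
    exact absurd hlt' (asymm hlt)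
  · rw [heq', ← hik] at hlt
    exact absurd hlt (irrefl _)
  · rw [← heq, ← hik] at hlt'
    exact absurd hlt' (irrefl _)
  · exact ⟨hidx, hidx'⟩

theorem ordConnected_blockIndex_comp {j : ℕ} (hPA : IsStableSort S j PA) (v : ℕ) :
    ((blockIndex S ∘ PA) ⁻¹' {v}).OrdConnected := by
  refine ⟨fun i hi k hk m ⟨him, hmk⟩ => ?_⟩
  simp only [Set.mem_preimage, Function.comp_apply, Set.mem_singleton_iff] at hi hk ⊢
  rcases him.eq_or_lt with rfl | him
  · exact hi
  rcases hmk.eq_or_lt with rfl | hmk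
  · exact hk
  have hS : S (PA i) = S (PA k) := eq_of_blockIndex_eq S (hi.trans hk.symm)
  obtain ⟨hlt, hlt'⟩ :=
    hPA.mem_Ioo_of_revPrefix_eq him hmk (by simp only [revPrefix, hS])
  have := blockIndex_mono S hlt.le
  have := blockIndex_mono S hlt'.le
  omega

theorem runCount_column_le (j : Fin w) (hPA : IsStableSort S j PA) :
    runCount (fun i => S (PA i) j) ≤ adjDiff S + 1 := by
  cases h with
  | zero => simp [runCount]
  | succ n =>
    calc runCount (fun i => S (PA i) j)
        ≤ #(changes fun i => S (PA i) j) + 1 := runCount_le_card_changes_add_one _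
      _ ≤ #(changes (blockIndex S ∘ PA)) + 1 := by
        gcongr
        exact changes_subset_changes fun a b hab => congrFun (eq_of_blockIndex_eq S hab) j
      _ ≤ #(univ.image (blockIndex S ∘ PA)) :=
        card_changes_add_one_le_card_image _ (ordConnected_blockIndex_comp hPA)
      _ ≤ #(univ.image (blockIndex S)) :=
        card_le_card (image_subset_iff.mpr fun i _ => mem_image_of_mem _ (mem_univ _))
      _ ≤ adjDiff S + 1 := adjDiff_eq_card_changes S ▸ card_image_blockIndex_le S

end

theorem stmt4 (h w : ℕ) (S : Fin h → Fin w → ℕ) (PA : Fin w → Fin h ≃ Fin h)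
    (hPA : ∀ j : Fin w, IsStableSort S (j : ℕ) (PA j)) :
    ∑ j : Fin w, runCount (fun i : Fin h => S (PA j i) j) ≤ w * (adjDiff S + 1) :=
  calc ∑ j : Fin w, runCount (fun i : Fin h => S (PA j i) j)
      ≤ ∑ _j : Fin w, (adjDiff S + 1) := sum_le_sum fun j _ => runCount_column_le j (hPA j)
    _ = w * (adjDiff S + 1) := by simp

end PBWT
end

section
/- Given two partitions I_p (of size x) and I_q (of size y ≥ 4) of the integer range [1,n] into consecutive intervals, there exists a refinement of I_p into at most x + ⌊y/2⌋ consecutive intervals such that every interval of the refinement overlaps at most three intervals of I_q. -/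
/-!
Cut `[1, n]` after the right end of every interval of `I_p` and after the right end of every
second interval of `I_q`. This gives at most `x + ⌊y/2⌋` pieces, and each piece lies inside an
interval of `I_p` because no cut of `I_p` falls strictly inside it. Two intervals of `I_q` ending
inside a piece, before its right end, would enclose a selected right end of `I_q`, which is a cut;
so at most one interval of `I_q` does, and every other interval of `I_q` meeting the piece contains
its right end, hence is unique. A piece therefore overlaps at most two intervals of `I_q`.
-/

namespace PBWT

/-- Two intervals `[p.1, p.2]` and `[q.1, q.2]` of integers overlap
(share a common element, given that both are nonempty). -/
def Overlaps (p q : ℕ × ℕ) : Prop := p.1 ≤ q.2 ∧ q.1 ≤ p.2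

/-- `L` is a partition of the integer range `[1, n]` into consecutive intervals. -/
def IsIntervalPartition (n : ℕ) (L : List (ℕ × ℕ)) : Prop :=
  L ≠ [] ∧ (∀ p ∈ L, p.1 ≤ p.2) ∧
    (∀ hL : L ≠ [], (L.head hL).1 = 1 ∧ (L.getLast hL).2 = n) ∧
    List.Chain' (fun p q => q.1 = p.2 + 1) L

section EverySecond

variable {α : Type*}

def everySecond : List α → List α
  | _ :: y :: r => y :: everySecond r
  | _ => []

theorem length_everySecond : ∀ l : List α, (everySecond l).length = l.length / 2
  | [] | [_] => by simp [everySecond]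
  | _ :: _ :: r => by simp [everySecond, length_everySecond r]; omega

theorem everySecond_sublist : ∀ l : List α, (everySecond l).Sublist l
  | [] | [_] => List.nil_sublist _
  | x :: y :: r => ((everySecond_sublist r).cons_cons y).cons x

theorem exists_mem_everySecond_of_ordConnected [Preorder α] {s : Set α} (hs : s.OrdConnected) :
    ∀ {l : List α}, l.Pairwise (· < ·) → ∀ {a b : α}, a ∈ l → b ∈ l → a ≠ b → a ∈ s → b ∈ s →
      ∃ t ∈ everySecond l, t ∈ s
  | [], _, _, _, ha, _, _, _, _ => by simp at ha
  | [_], _, _, _, ha, hb, hab, _, _ => by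
    rw [List.mem_singleton] at ha hb
    exact absurd (ha.trans hb.symm) hab
  | x :: y :: r, hl, a, b, ha, hb, hab, has, hbs => by
    by_cases hys : y ∈ s
    · exact ⟨y, List.mem_cons_self, hys⟩
    obtain ⟨⟨hxy, -⟩, hyr, hr⟩ : (x < y ∧ ∀ c ∈ r, x < c) ∧ (∀ c ∈ r, y < c) ∧
        r.Pairwise (· < ·) := by simpa using hl
    -- a pair of distinct points of `s` involving `x` or `y` would put `y` into `s`
    have mem_tail : ∀ {c d}, c ∈ x :: y :: r → d ∈ x :: y :: r → c ≠ d → c ∈ s → d ∈ s →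
        c ∈ r := by
      intro c d hc hd hcd hcs hds
      simp only [List.mem_cons] at hc hd
      rcases hc with rfl | rfl | hc
      · have hyd : y ≤ d := by
          rcases hd with rfl | rfl | hd
          exacts [absurd rfl hcd, le_rfl, (hyr d hd).le]
        exact absurd (hs.out hcs hds ⟨hxy.le, hyd⟩) hys
      · exact absurd hcs hys
      · exact hc
    obtain ⟨t, ht, hts⟩ := exists_mem_everySecond_of_ordConnected hs hr
      (mem_tail ha hb hab has hbs) (mem_tail hb ha hab.symm hbs has) hab has hbs
    exact ⟨t, List.mem_cons_of_mem _ ht, hts⟩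

end EverySecond

section Chain

variable {L : List (ℕ × ℕ)}

theorem pairwise_snd_lt_fst_of_isChain (hchain : L.IsChain (fun p q => q.1 = p.2 + 1))
    (hle : ∀ p ∈ L, p.1 ≤ p.2) : L.Pairwise (fun p q => p.2 < q.1) := by
  induction L with
  | nil => exact .nil
  | cons a t ih =>
    have ht := ih hchain.tail fun p hp => hle p (List.mem_cons_of_mem _ hp)
    refine List.Pairwise.cons (fun q hq => ?_) ht
    cases t with
    | nil => simp at hq
    | cons b t =>
      have hab : b.1 = a.2 + 1 := (List.isChain_cons_cons.mp hchain).1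
      rcases List.mem_cons.mp hq with rfl | hq
      · omega
      · have := List.rel_of_pairwise_cons ht hq
        have := hle b (by simp)
        omega

theorem exists_mem_fst_le_le_snd_of_isChain (hchain : L.IsChain (fun p q => q.1 = p.2 + 1))
    (hL : L ≠ []) {m : ℕ} (h1 : (L.head hL).1 ≤ m) (h2 : m ≤ (L.getLast hL).2) :
    ∃ p ∈ L, p.1 ≤ m ∧ m ≤ p.2 := by
  induction L with
  | nil => exact absurd rfl hL
  | cons a t ih =>
    by_cases hma : m ≤ a.2
    · exact ⟨a, List.mem_cons_self, h1, hma⟩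
    have ht : t ≠ [] := by rintro rfl; exact hma h2
    have hhead : (t.head ht).1 = a.2 + 1 := by
      obtain ⟨b, t, rfl⟩ := List.exists_cons_of_ne_nil ht
      exact (List.isChain_cons_cons.mp hchain).1
    obtain ⟨p, hp, hpm⟩ := ih hchain.tail ht (by omega) (by rwa [List.getLast_cons ht] at h2)
    exact ⟨p, List.mem_cons_of_mem _ hp, hpm⟩

end Chain

namespace IsIntervalPartition

variable {n : ℕ} {L : List (ℕ × ℕ)}

theorem pairwise_lt (hL : IsIntervalPartition n L) : L.Pairwise (fun p q => p.2 < q.1) :=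
  pairwise_snd_lt_fst_of_isChain hL.2.2.2 hL.2.1

theorem pairwise_snd_lt (hL : IsIntervalPartition n L) : (L.map Prod.snd).Pairwise (· < ·) :=
  List.pairwise_map.mpr <| hL.pairwise_lt.imp_of_mem fun _ hb h => h.trans_le (hL.2.1 _ hb)

theorem nodup (hL : IsIntervalPartition n L) : L.Nodup :=
  hL.pairwise_lt.imp_of_mem fun {p _} hp _ h he => by subst he; have := hL.2.1 p hp; omega

theorem lt_or_lt_of_ne (hL : IsIntervalPartition n L) {p q : ℕ × ℕ} (hp : p ∈ L) (hq : q ∈ L)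
    (hpq : p ≠ q) : p.2 < q.1 ∨ q.2 < p.1 :=
  have : Std.Symm (fun p q : ℕ × ℕ => p.2 < q.1 ∨ q.2 < p.1) := ⟨fun _ _ => Or.symm⟩
  (hL.pairwise_lt.imp (S := fun p q : ℕ × ℕ => p.2 < q.1 ∨ q.2 < p.1) Or.inl).forall hp hq hpq

theorem eq_of_mem_of_mem (hL : IsIntervalPartition n L) {p q : ℕ × ℕ} (hp : p ∈ L) (hq : q ∈ L)
    {m : ℕ} (hmp : p.1 ≤ m ∧ m ≤ p.2) (hmq : q.1 ≤ m ∧ m ≤ q.2) : p = q := by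
  by_contra hpq
  have := hL.lt_or_lt_of_ne hp hq hpq
  omega

theorem one_le_fst (hL : IsIntervalPartition n L) {p : ℕ × ℕ} (hp : p ∈ L) : 1 ≤ p.1 := by
  obtain ⟨a, t, rfl⟩ := List.exists_cons_of_ne_nil hL.1
  have ha : a.1 = 1 := (hL.2.2.1 hL.1).1
  rcases List.mem_cons.mp hp with rfl | hp
  · exact ha.ge
  · have := List.rel_of_pairwise_cons hL.pairwise_lt hp
    have := hL.2.1 a List.mem_cons_self
    omega

theorem snd_le (hL : IsIntervalPartition n L) {p : ℕ × ℕ} (hp : p ∈ L) : p.2 ≤ n := by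
  simpa [List.getLast_map, (hL.2.2.1 hL.1).2] using
    (hL.pairwise_snd_lt.imp le_of_lt).rel_getLast (List.mem_map_of_mem hp)

theorem snd_mem_Icc (hL : IsIntervalPartition n L) {p : ℕ × ℕ} (hp : p ∈ L) :
    p.2 ∈ Finset.Icc 1 n :=
  Finset.mem_Icc.mpr ⟨(hL.one_le_fst hp).trans (hL.2.1 p hp), hL.snd_le hp⟩

theorem exists_mem_fst_le_le_snd (hL : IsIntervalPartition n L) {m : ℕ} (h1 : 1 ≤ m)
    (hn : m ≤ n) : ∃ p ∈ L, p.1 ≤ m ∧ m ≤ p.2 :=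
  exists_mem_fst_le_le_snd_of_isChain hL.2.2.2 hL.1 ((hL.2.2.1 hL.1).1.le.trans h1)
    (hn.trans (hL.2.2.1 hL.1).2.ge)

theorem exists_mem_snd_add_one_eq (hL : IsIntervalPartition n L) {p : ℕ × ℕ} (hp : p ∈ L)
    (hp1 : p.1 ≠ 1) : ∃ q ∈ L, q.2 + 1 = p.1 := by
  obtain ⟨i, hi, rfl⟩ := List.mem_iff_getElem.mp hp
  cases i with
  | zero => exact absurd (List.head_eq_getElem hL.1 ▸ (hL.2.2.1 hL.1).1) hp1
  | succ i => exact ⟨L[i], List.getElem_mem _, (hL.2.2.2.getElem i hi).symm⟩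

theorem exists_mem_superset (hL : IsIntervalPartition n L) {s : ℕ × ℕ} (h1 : 1 ≤ s.1)
    (hs : s.1 ≤ s.2) (hn : s.2 ≤ n) (hcut : ∀ p ∈ L, s.1 ≤ p.2 → s.2 ≤ p.2) :
    ∃ p ∈ L, p.1 ≤ s.1 ∧ s.2 ≤ p.2 := by
  obtain ⟨p, hp, hps, hsp⟩ := hL.exists_mem_fst_le_le_snd (h1.trans hs) hn
  refine ⟨p, hp, ?_, hsp⟩
  by_contra! hlt
  obtain ⟨q, hq, hqp⟩ := hL.exists_mem_snd_add_one_eq hp (by omega)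
  have := hcut q hq (by omega)
  omega

theorem length_filter_overlap_le_two (hL : IsIntervalPartition n L) {s : ℕ × ℕ}
    (hs : ∀ p ∈ L, ∀ q ∈ L, p.2 ∈ Set.Ico s.1 s.2 → q.2 ∈ Set.Ico s.1 s.2 → p = q) :
    (L.filter (fun q => s.1 ≤ q.2 && q.1 ≤ s.2)).length ≤ 2 := by
  classical
  rw [← List.toFinset_card_of_nodup (hL.nodup.filter _), List.toFinset_filter]
  have hsplit : {q ∈ L.toFinset | (s.1 ≤ q.2 && q.1 ≤ s.2) = true} ⊆
      {q ∈ L.toFinset | q.2 ∈ Set.Ico s.1 s.2} ∪ {q ∈ L.toFinset | q.1 ≤ s.2 ∧ s.2 ≤ q.2} := by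
    intro q hq
    simp only [Finset.mem_union, Finset.mem_filter, Bool.and_eq_true, decide_eq_true_eq,
      Set.mem_Ico] at hq ⊢
    obtain ⟨hq, h1, h2⟩ := hq
    rcases lt_or_ge q.2 s.2 with h | h
    exacts [Or.inl ⟨hq, h1, h⟩, Or.inr ⟨hq, h2, h⟩]
  calc _ ≤ _ := Finset.card_le_card hsplit
    _ ≤ _ := Finset.card_union_le _ _
    _ ≤ 1 + 1 := by
      gcongr <;> refine Finset.card_le_one.mpr fun p hp q hq => ?_ <;>
        simp only [Finset.mem_filter, List.mem_toFinset] at hp hq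
      · exact hs p hp.1 q hq.1 hp.2 hq.2
      · exact hL.eq_of_mem_of_mem hp.1 hq.1 hp.2 hq.2

end IsIntervalPartition

section Cuts

def intervalsOfCuts : ℕ → List ℕ → List (ℕ × ℕ)
  | _, [] => []
  | a, c :: l => (a + 1, c) :: intervalsOfCuts c l

theorem map_snd_intervalsOfCuts : ∀ (a : ℕ) (l : List ℕ), (intervalsOfCuts a l).map Prod.snd = l
  | _, [] => rfl
  | _, c :: l => congrArg (c :: ·) (map_snd_intervalsOfCuts c l)

theorem isChain_intervalsOfCuts :
    ∀ (a : ℕ) (l : List ℕ), (intervalsOfCuts a l).IsChain (fun p q => q.1 = p.2 + 1)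
  | _, [] => .nil
  | _, [_] => .singleton _
  | _, c :: d :: l => .cons_cons rfl (isChain_intervalsOfCuts c (d :: l))

theorem mem_intervalsOfCuts :
    ∀ {a : ℕ} {l : List ℕ}, (∀ c ∈ l, a < c) → l.Pairwise (· < ·) →
      ∀ {s : ℕ × ℕ}, s ∈ intervalsOfCuts a l → a < s.1 ∧ s.1 ≤ s.2 ∧ ∀ c ∈ l, s.1 ≤ c → s.2 ≤ c
  | _, [], _, _, _, hs => by simp [intervalsOfCuts] at hs
  | a, c :: l, hal, hl, s, hs => by
    obtain ⟨hcl, hl⟩ := List.pairwise_cons.mp hl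
    have hac := hal c List.mem_cons_self
    rcases List.mem_cons.mp hs with rfl | hs
    · refine ⟨by simp, hac, fun d hd _ => ?_⟩
      rcases List.mem_cons.mp hd with rfl | hd
      exacts [le_rfl, (hcl d hd).le]
    · obtain ⟨hcs, hs12, hgap⟩ := mem_intervalsOfCuts hcl hl hs
      refine ⟨hac.trans hcs, hs12, fun d hd hsd => ?_⟩
      rcases List.mem_cons.mp hd with rfl | hd
      exacts [absurd hsd (not_le.mpr hcs), hgap d hd hsd]

theorem exists_isIntervalPartition_of_cuts {n : ℕ} (C : Finset ℕ) (hC : C ⊆ Finset.Icc 1 n)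
    (hn : n ∈ C) : ∃ R, IsIntervalPartition n R ∧ R.length = C.card ∧
      ∀ s ∈ R, s.2 ∈ C ∧ ∀ c ∈ C, s.1 ≤ c → s.2 ≤ c := by
  set l := C.sort
  have hmem : ∀ {c}, c ∈ l ↔ c ∈ C := C.mem_sort _
  have hbound : ∀ {c}, c ∈ l → 1 ≤ c ∧ c ≤ n := fun hc => Finset.mem_Icc.mp (hC (hmem.mp hc))
  have hl : l ≠ [] := List.ne_nil_of_mem (hmem.mpr hn)
  have hsnd {s} (hs : s ∈ intervalsOfCuts 0 l) : s.2 ∈ l := by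
    simpa [map_snd_intervalsOfCuts] using List.mem_map_of_mem (f := Prod.snd) hs
  have hcuts {s} (hs : s ∈ intervalsOfCuts 0 l) :=
    mem_intervalsOfCuts (fun c hc => (hbound hc).1) (Finset.sortedLT_sort C).pairwise hs
  refine ⟨intervalsOfCuts 0 l, ⟨?_, fun s hs => (hcuts hs).2.1, fun hR => ⟨?_, ?_⟩,
    isChain_intervalsOfCuts 0 l⟩, ?_, fun s hs =>
      ⟨hmem.mp (hsnd hs), fun c hc => (hcuts hs).2.2 c (hmem.mpr hc)⟩⟩
  · exact fun h => hl (by rw [← map_snd_intervalsOfCuts 0 l, h, List.map_nil])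
  · obtain ⟨c, l', hcl⟩ := List.exists_cons_of_ne_nil hl
    simp [hcl, intervalsOfCuts]
  · have hlast_eq : ((intervalsOfCuts 0 l).getLast hR).2 = l.getLast hl := by
      rw [← List.getLast_map (f := Prod.snd) (by simpa using hR)]
      exact List.getLast_congr _ _ (map_snd_intervalsOfCuts 0 l)
    refine le_antisymm (hbound (hsnd (List.getLast_mem hR))).2 ?_
    exact hlast_eq ▸ (C.pairwise_sort (· ≤ ·)).rel_getLast (hmem.mpr hn)
  · rw [← List.length_map (f := Prod.snd), map_snd_intervalsOfCuts, Finset.length_sort]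

def refiningCuts (Ip Iq : List (ℕ × ℕ)) : Finset ℕ :=
  (Ip.map Prod.snd ++ everySecond (Iq.map Prod.snd)).toFinset

theorem card_refiningCuts_le (Ip Iq : List (ℕ × ℕ)) :
    (refiningCuts Ip Iq).card ≤ Ip.length + Iq.length / 2 :=
  (List.toFinset_card_le _).trans_eq (by simp [length_everySecond])

theorem refiningCuts_subset_Icc {n : ℕ} {Ip Iq : List (ℕ × ℕ)} (hp : IsIntervalPartition n Ip)
    (hq : IsIntervalPartition n Iq) : refiningCuts Ip Iq ⊆ Finset.Icc 1 n := by
  intro c hc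
  simp only [refiningCuts, List.mem_toFinset, List.mem_append] at hc
  obtain ⟨p, hp', rfl⟩ | ⟨q, hq', rfl⟩ :=
    hc.imp List.mem_map.mp (List.mem_map.mp <| (everySecond_sublist _).subset ·)
  exacts [hp.snd_mem_Icc hp', hq.snd_mem_Icc hq']

end Cuts

theorem stmt8_general (n : ℕ) (Ip Iq : List (ℕ × ℕ))
    (hp : IsIntervalPartition n Ip) (hq : IsIntervalPartition n Iq) :
    ∃ R : List (ℕ × ℕ), IsIntervalPartition n R ∧
      R.length ≤ Ip.length + Iq.length / 2 ∧
      (∀ s ∈ R, ∃ p ∈ Ip, p.1 ≤ s.1 ∧ s.2 ≤ p.2) ∧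
      (∀ s ∈ R, (Iq.filter (fun q => s.1 ≤ q.2 && q.1 ≤ s.2)).length ≤ 3) := by
  have hn : n ∈ refiningCuts Ip Iq := by
    have := List.mem_map_of_mem (f := Prod.snd) (List.getLast_mem hp.1)
    simp_all [refiningCuts, (hp.2.2.1 hp.1).2]
  obtain ⟨R, hR, hlen, hcut⟩ :=
    exists_isIntervalPartition_of_cuts _ (refiningCuts_subset_Icc hp hq) hn
  refine ⟨R, hR, hlen ▸ card_refiningCuts_le Ip Iq, fun s hs => ?_, fun s hs => ?_⟩
  · refine hp.exists_mem_superset (hR.one_le_fst hs) (hR.2.1 s hs) (hR.snd_le hs) fun p hp' => ?_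
    exact (hcut s hs).2 p.2 (by simp [refiningCuts, List.mem_map_of_mem hp'])
  · refine (hq.length_filter_overlap_le_two fun q hq' q' hq'' hqs hq's => ?_).trans (by norm_num)
    by_contra hne
    obtain ⟨t, ht, hts⟩ := exists_mem_everySecond_of_ordConnected Set.ordConnected_Ico
      hq.pairwise_snd_lt (List.mem_map_of_mem hq') (List.mem_map_of_mem hq'')
      (fun h => hne (List.inj_on_of_nodup_map (hq.pairwise_snd_lt.imp ne_of_lt) hq' hq'' h))
      hqs hq's
    exact hts.2.not_ge ((hcut s hs).2 t (by simp [refiningCuts, ht]) hts.1)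

theorem stmt8 (n : ℕ) (Ip Iq : List (ℕ × ℕ))
    (hp : IsIntervalPartition n Ip) (hq : IsIntervalPartition n Iq)
    (hy : 4 ≤ Iq.length) :
    ∃ R : List (ℕ × ℕ), IsIntervalPartition n R ∧
      R.length ≤ Ip.length + Iq.length / 2 ∧
      (∀ s ∈ R, ∃ p ∈ Ip, p.1 ≤ s.1 ∧ s.2 ≤ p.2) ∧
      (∀ s ∈ R, (Iq.filter (fun q => s.1 ≤ q.2 && q.1 ≤ s.2)).length ≤ 3) :=
  stmt8_general n Ip Iq hp hq

end PBWT
end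

section
/- If S_i ≠ S_{i+1} and j'' is the length of their longest common prefix, then for every column index 1 ≤ j ≤ j''+1, the haplotype indices i and i+1 occupy consecutive positions in PA_j (with i immediately before i+1). -/
/-!
For `t ≤ j''` the haplotypes `i` and `i + 1` have the same prefix of length `t`, hence the same
sort key. A stable sort keeps them in their original order, and a position strictly between
them would have to hold an index with that same key lying strictly between `i` and `i + 1`.
-/

namespace PBWT

theorem revPrefix_congr_s13 {h w : ℕ} {S : Fin h → Fin w → ℕ} {j : ℕ} {x y : Fin h}
    (hxy : ∀ t (ht : t < w), t < j → S x ⟨t, ht⟩ = S y ⟨t, ht⟩) :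
    revPrefix S j x = revPrefix S j y := by
  unfold revPrefix
  congr 1
  refine List.filterMap_congr fun t ht => ?_
  split_ifs with htw
  · rw [hxy t htw (List.mem_range.mp ht)]
  · rfl

/-- `IsStableSort S j PA` is definitionally `IsStableSortBy (revPrefix S j) PA`, since
`List.Lex (· < ·)` is the order `<` on lists. -/
def IsStableSortBy {α : Type*} [LT α] {h : ℕ} (key : Fin h → α) (PA : Fin h ≃ Fin h) : Prop :=
  ∀ a b : Fin h, a < b →
    key (PA a) < key (PA b) ∨ (key (PA a) = key (PA b) ∧ (PA a).val < (PA b).val)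

namespace IsStableSortBy

variable {α : Type*} [Preorder α] {h : ℕ} {key : Fin h → α} {PA : Fin h ≃ Fin h}
  {x y : Fin h}

theorem symm_lt_symm (hPA : IsStableSortBy key PA) (hkey : key x = key y) (hxy : x < y) :
    PA.symm x < PA.symm y := by
  refine lt_of_le_of_ne (not_lt.mp fun hyx => ?_) (PA.symm.injective.ne hxy.ne)
  rcases hPA _ _ hyx with hlt | ⟨-, hlt⟩
  · simp only [Equiv.apply_symm_apply, hkey, lt_irrefl] at hlt
  · simp only [Equiv.apply_symm_apply] at hlt
    exact hlt.not_gt hxy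

theorem not_between (hPA : IsStableSortBy key PA) (hkey : key x = key y)
    (hxy : y.val = x.val + 1) {c : Fin h} (hxc : PA.symm x < c) (hcy : c < PA.symm y) :
    False := by
  have hx := hPA _ _ hxc
  have hy := hPA _ _ hcy
  simp only [Equiv.apply_symm_apply] at hx hy
  rcases hx with hx | ⟨hx, hxc⟩ <;> rcases hy with hy | ⟨hy, hcy⟩
  · exact (hx.trans hy).ne hkey
  · exact hx.ne (hkey.trans hy.symm)
  · exact hy.ne (hx.symm.trans hkey)
  · omega

theorem symm_succ (hPA : IsStableSortBy key PA) (hkey : key x = key y)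
    (hxy : y.val = x.val + 1) : (PA.symm y).val = (PA.symm x).val + 1 := by
  have hlt : PA.symm x < PA.symm y := hPA.symm_lt_symm hkey (by simp [Fin.lt_def, hxy])
  by_contra hne
  exact hPA.not_between hkey hxy (c := ⟨(PA.symm x).val + 1, by omega⟩)
    (by simp [Fin.lt_def]) (by simp only [Fin.lt_def]; omega)

end IsStableSortBy

theorem stmt13_general (h w : ℕ) (S : Fin h → Fin w → ℕ) (i : Fin h) (hi : (i : ℕ) + 1 < h)
    (j2 : ℕ) (hj : j2 < w)
    (hpre : ∀ t : ℕ, ∀ ht : t < j2, S i ⟨t, ht.trans hj⟩ = S ⟨(i : ℕ) + 1, hi⟩ ⟨t, ht.trans hj⟩) :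
    ∀ t : ℕ, t ≤ j2 → ∀ PA : Fin h ≃ Fin h, IsStableSort S t PA →
      (PA.symm ⟨(i : ℕ) + 1, hi⟩).val = (PA.symm i).val + 1 := by
  intro t ht PA hPA
  exact IsStableSortBy.symm_succ (key := revPrefix S t) hPA
    (revPrefix_congr_s13 fun s _ hs => hpre s (hs.trans_le ht)) rfl

theorem stmt13 (h w : ℕ) (S : Fin h → Fin w → ℕ) (i : Fin h) (hi : (i : ℕ) + 1 < h)
    (j2 : ℕ) (hj : j2 < w)
    (hne0 : S i ≠ S ⟨(i : ℕ) + 1, hi⟩)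
    (hpre : ∀ t : ℕ, ∀ ht : t < j2, S i ⟨t, ht.trans hj⟩ = S ⟨(i : ℕ) + 1, hi⟩ ⟨t, ht.trans hj⟩)
    (hne : S i ⟨j2, hj⟩ ≠ S ⟨(i : ℕ) + 1, hi⟩ ⟨j2, hj⟩) :
    ∀ t : ℕ, t ≤ j2 → ∀ PA : Fin h ≃ Fin h, IsStableSort S t PA →
      (PA.symm ⟨(i : ℕ) + 1, hi⟩).val = (PA.symm i).val + 1 :=
  stmt13_general h w S i hi j2 hj hpre

end PBWT
end
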